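/- Behavioural congruence of closed PGA terms is a congruence with respect to concatenation: if t₁ ≅ t₁' and t₂ ≅ t₂' then t₁ ; t₂ ≅ t₁' ; t₂', where ≅ is defined by t ≅ t' iff for all l, n ∈ ℕ, #l ; t ; !ⁿ is behaviourally equivalent to #l ; t' ; !ⁿ. -/

import Mathlib

/-- Primitive instructions over a set `A` of basic instructions. -/
inductive PInstr (A : Type) where
  | basic : A → PInstr A
  | ptst : A → PInstr A
  | ntst : A → PInstr A
  | jmp : ℕ → PInstr A
  | halt : PInstr A

open PInstr

/-- Closed PGA instruction-sequence terms: primitive instruction constants,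
concatenation `;`, and repetition `^ω`. -/
inductive ISTm (A : Type) where
  | ins : PInstr A → ISTm A
  | seq : ISTm A → ISTm A → ISTm A
  | rep : ISTm A → ISTm A

/-- `pw t n` is `t^{n+1}`: `t^1 = t`, `t^{n+1} = t ; t^n`. -/
def ISTm.pw {A : Type} (t : ISTm A) : ℕ → ISTm A
  | 0 => t
  | n + 1 => .seq t (t.pw n)

/-- `cat us t` is the term `u₁ ; ⋯ ; uₖ ; t` (right-associated). -/
def ISTm.cat {A : Type} : List (PInstr A) → ISTm A → ISTm A
  | [], t => t
  | u :: us, t => .seq (.ins u) (ISTm.cat us t)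

/-- `nel u us` is the right-associated term of the non-empty instruction
list `u :: us`. -/
def ISTm.nel {A : Type} : PInstr A → List (PInstr A) → ISTm A
  | u, [] => .ins u
  | u, v :: vs => .seq (.ins u) (ISTm.nel v vs)

/-- Equational derivability from the structural congruence axioms
PGA1–PGA8. -/
inductive EqI {A : Type} : ISTm A → ISTm A → Prop where
  | refl (t) : EqI t t
  | symm {t t'} : EqI t t' → EqI t' t
  | trans {t t' t''} : EqI t t' → EqI t' t'' → EqI t t''
  | seqCongr {s s' t t'} : EqI s s' → EqI t t' → EqI (.seq s t) (.seq s' t')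
  | repCongr {t t'} : EqI t t' → EqI (.rep t) (.rep t')
  | pga1 (x y z) : EqI (.seq (.seq x y) z) (.seq x (.seq y z))
  | pga2 (x) (n : ℕ) : EqI (.rep (x.pw n)) (.rep x)
  | pga3 (x y) : EqI (.seq (.rep x) y) (.rep x)
  | pga4 (x y) : EqI (.rep (.seq x y)) (.seq x (.rep (.seq y x)))
  | pga5 (us : List (PInstr A)) :
      EqI (.cat (jmp (us.length + 1) :: us) (.ins (jmp 0)))
        (.cat (jmp 0 :: us) (.ins (jmp 0)))
  | pga6 (us : List (PInstr A)) (l : ℕ) :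
      EqI (.cat (jmp (us.length + 1) :: us) (.ins (jmp l)))
        (.cat (jmp (l + us.length + 1) :: us) (.ins (jmp l)))
  | pga7 (us : List (PInstr A)) (l : ℕ) :
      EqI (.rep (.nel (jmp (l + us.length + 1)) us))
        (.rep (.nel (jmp l) us))
  | pga8 (us : List (PInstr A)) (v : PInstr A) (vs : List (PInstr A)) (l : ℕ) :
      EqI (.cat (jmp (l + us.length + vs.length + 2) :: us) (.rep (.nel v vs)))
        (.cat (jmp (l + us.length + 1) :: us) (.rep (.nel v vs)))

/-- Thread terms of the combination of PGA with BTA with projections: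
inaction `D`, termination `S`, postconditional composition, projections,
and thread extraction applied to instruction-sequence terms. -/
inductive TT (A : Type) where
  | D : TT A
  | S : TT A
  | pcc : TT A → A → TT A → TT A
  | proj : ℕ → TT A → TT A
  | extr : ISTm A → TT A

/-- Derivable equality of thread terms from TE1–TE13, PR1–PR4, AIP, and
the structural congruence axioms PGA1–PGA8 (lifted through thread
extraction). -/
inductive EqT {A : Type} : TT A → TT A → Prop where
  | refl (x) : EqT x x
  | symm {x y} : EqT x y → EqT y x
  | trans {x y z} : EqT x y → EqT y z → EqT x z
  | pccCongr {x x' y y'} (a : A) : EqT x x' → EqT y y' →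
      EqT (.pcc x a y) (.pcc x' a y')
  | projCongr (n : ℕ) {x y} : EqT x y → EqT (.proj n x) (.proj n y)
  | extrCongr {t t' : ISTm A} : EqI t t' → EqT (.extr t) (.extr t')
  | te1 (a : A) : EqT (.extr (.ins (basic a))) (.pcc .D a .D)
  | te2 (a : A) (X : ISTm A) :
      EqT (.extr (.seq (.ins (basic a)) X)) (.pcc (.extr X) a (.extr X))
  | te3 (a : A) : EqT (.extr (.ins (ptst a))) (.pcc .D a .D)
  | te4 (a : A) (X : ISTm A) :
      EqT (.extr (.seq (.ins (ptst a)) X))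
        (.pcc (.extr X) a (.extr (.seq (.ins (jmp 2)) X)))
  | te5 (a : A) : EqT (.extr (.ins (ntst a))) (.pcc .D a .D)
  | te6 (a : A) (X : ISTm A) :
      EqT (.extr (.seq (.ins (ntst a)) X))
        (.pcc (.extr (.seq (.ins (jmp 2)) X)) a (.extr X))
  | te7 (l : ℕ) : EqT (.extr (.ins (jmp l) : ISTm A)) .D
  | te8 (X : ISTm A) : EqT (.extr (.seq (.ins (jmp 0)) X)) .D
  | te9 (X : ISTm A) : EqT (.extr (.seq (.ins (jmp 1)) X)) (.extr X)
  | te10 (l : ℕ) (u : PInstr A) :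
      EqT (.extr (.seq (.ins (jmp (l + 2))) (.ins u))) .D
  | te11 (l : ℕ) (u : PInstr A) (X : ISTm A) :
      EqT (.extr (.seq (.ins (jmp (l + 2))) (.seq (.ins u) X)))
        (.extr (.seq (.ins (jmp (l + 1))) X))
  | te12 : EqT (.extr (.ins (halt : PInstr A))) .S
  | te13 (X : ISTm A) : EqT (.extr (.seq (.ins halt) X)) .S
  | pr1 (x : TT A) : EqT (.proj 0 x) .D
  | pr2 (n : ℕ) : EqT (.proj (n + 1) (.D : TT A)) .D
  | pr3 (n : ℕ) : EqT (.proj (n + 1) (.S : TT A)) .S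
  | pr4 (n : ℕ) (x y : TT A) (a : A) :
      EqT (.proj (n + 1) (.pcc x a y)) (.pcc (.proj n x) a (.proj n y))
  | aip {x y : TT A} : (∀ n : ℕ, EqT (.proj n x) (.proj n y)) → EqT x y

/-- `halts n` is `!^{n+1}`. -/
def halts {A : Type} : ℕ → ISTm A
  | 0 => .ins halt
  | n + 1 => .seq (.ins halt) (halts n)

/-- `appHalts t n` is `t ; !ⁿ`, with `t ; !⁰ = t`. -/
def appHalts {A : Type} (t : ISTm A) : ℕ → ISTm A
  | 0 => t
  | n + 1 => .seq t (halts n)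

/-- Behavioural equivalence: the threads extracted from the two terms are
derivably equal. -/
def BEqv {A : Type} (t t' : ISTm A) : Prop := EqT (.extr t) (.extr t')

/-- Behavioural congruence: `t ≅ t'` iff for all `l, n ∈ ℕ`,
`#l ; t ; !ⁿ ≈ #l ; t' ; !ⁿ`. -/
def BCong {A : Type} (t t' : ISTm A) : Prop :=
  ∀ l n : ℕ, BEqv (.seq (.ins (jmp l)) (appHalts t n))
    (.seq (.ins (jmp l)) (appHalts t' n))

/-!
The right operand is the easy one: by TE1–TE13 and PGA1, PGA3 the threads of `#l ; t ; Y` are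
built from the threads of the terms `#p ; Y` alone, so `t ; Y ≅ t ; Y'` follows from `Y ≅ Y'`
by induction on `t`.

For the left operand, PGA1–PGA4 bring `t` to a finite form `u₁ ; … ; uₘ` or to a form that
absorbs everything concatenated to it, so that `t ; Z = t`. In the finite case the thread of
`#l ; u₁ ; … ; uₘ ; Y` is a finite tree with leaves `D`, `S` and exits into the threads of the
terms `#(k+1) ; Y`. The tails `!ⁿ` separate such trees, since exit `k` terminates in `t ; !ⁿ`
exactly when `k < n`. Hence `t ≅ t'` forces equal trees when both are finite, and a tree
without exits when only `t` is.

Reading trees off derivable equations needs a model in which these equations hold: threads are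
compared through their projections `π_d`, terms are interpreted as instruction streams (`t^ω` as
the fixed point of a contractive stream map), and extraction follows jump chains, a never-ending
chain giving `D`. That the model respects repetition rests on each projection of an extracted
thread reading only a finite prefix of the stream.
-/

infix:50 " ≡ₜ " => EqT

infix:50 " ≡ᵢ " => EqI

instance {A : Type} : Trans (@EqT A) EqT EqT := ⟨EqT.trans⟩

instance {A : Type} : Trans (@EqI A) EqI EqI := ⟨EqI.trans⟩

open Relation

/-! ### Fixed points of contractive stream maps -/

namespace Stream'

variable {α : Type*}

def Contractive (F : Stream' α → Stream' α) : Prop :=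
  ∀ ⦃s s' : Stream' α⦄ (n : ℕ),
    (∀ m < n, s.get m = s'.get m) → (F s).get n = (F s').get n

/-- For contractive `F` this is its unique fixed point (`Contractive.fix_eq`,
`Contractive.eq_fix`), and the `default` entries are never looked at. -/
def fix [Inhabited α] (F : Stream' α → Stream' α) : Stream' α
  | n => (F fun m => if m < n then fix F m else default).get n

theorem fix_get [Inhabited α] (F : Stream' α → Stream' α) (n : ℕ) :
    (fix F).get n = (F fun m => if m < n then fix F m else default).get n := by
  rw [get, fix]

namespace Contractive

variable {F G : Stream' α → Stream' α}

theorem cons (a : α) : Contractive (cons a) := by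
  rintro s s' (_ | n) h
  · rfl
  · exact h n n.lt_succ_self

theorem const (s₀ : Stream' α) : Contractive fun _ => s₀ := fun _ _ _ _ => rfl

theorem comp (hF : Contractive F) (hG : Contractive G) : Contractive (F ∘ G) :=
  fun _ _ n h => hF n fun m hm => hG m fun k hk => h k (hk.trans hm)

theorem iterate_get (hF : Contractive F) (s s' : Stream' α) {K n : ℕ} (h : n < K) :
    (F^[K] s).get n = (F^[K] s').get n := by
  induction K generalizing n with
  | zero => exact absurd h n.not_lt_zero
  | succ K ih =>
    rw [Function.iterate_succ_apply', Function.iterate_succ_apply']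
    exact hF n fun m hm => ih (by omega)

variable [Inhabited α]

theorem fix_eq (hF : Contractive F) : F (fix F) = fix F := by
  ext n
  rw [fix_get]
  exact hF n fun m hm => by simp [get, hm]

theorem eq_fix (hF : Contractive F) {s : Stream' α} (h : F s = s) : s = fix F := by
  ext n
  induction n using Nat.strong_induction_on with
  | _ n ih => rw [← h, ← hF.fix_eq]; exact hF n ih

theorem fix_comp (hF : Contractive F) (hG : Contractive G) : fix (F ∘ G) = F (fix (G ∘ F)) :=
  ((hF.comp hG).eq_fix (congrArg F ((hG.comp hF).fix_eq))).symm

end Contractive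

end Stream'

/-! ### Thread extraction from instruction streams -/

/-- Instruction streams; `none` marks the positions past the end of a finite instruction
sequence. -/
abbrev IStream (A : Type) := Stream' (Option (PInstr A))

/-- Finite threads: the values of the projections `π_d` of threads. -/
inductive FinThread (A : Type) where
  | D : FinThread A
  | S : FinThread A
  | pcc : FinThread A → A → FinThread A → FinThread A

namespace FinThread

variable {A : Type}

/-- One extraction step from an instruction, given the threads at the next two positions;
proper jumps have already been followed when it is applied, and `#0` gives `D`. -/
def ofInstr : Option (PInstr A) → FinThread A → FinThread A → FinThread A
  | some (basic a), next, _ => pcc next a next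
  | some (ptst a), next, skip => pcc next a skip
  | some (ntst a), next, skip => pcc skip a next
  | some halt, _, _ => S
  | _, _, _ => D

end FinThread

namespace IStream

open Stream'

variable {A : Type} {σ τ : IStream A} {a b : Option (PInstr A)} {p q d : ℕ}

def JumpStep (σ : IStream A) (p q : ℕ) : Prop :=
  ∃ k, σ.get p = some (jmp (k + 1)) ∧ q = p + (k + 1)

def Lands (σ : IStream A) (p q : ℕ) : Prop :=
  ReflTransGen (JumpStep σ) p q ∧ ∀ k, σ.get q ≠ some (jmp (k + 1))

theorem JumpStep.lt (h : JumpStep σ p q) : p < q := by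
  obtain ⟨k, -, rfl⟩ := h
  omega

theorem jumpStep_rightUnique : Relator.RightUnique (JumpStep σ) := by
  rintro p q q' ⟨k, hk, rfl⟩ ⟨k', hk', rfl⟩
  simp_all

theorem le_of_reflTransGen (h : ReflTransGen (JumpStep σ) p q) : p ≤ q := by
  induction h with
  | refl => rfl
  | tail _ hs ih => exact ih.trans hs.lt.le

theorem not_jumpStep_of_lands (h : Lands σ p q) (r : ℕ) : ¬ JumpStep σ q r :=
  fun ⟨k, hk, _⟩ => h.2 k hk

theorem Lands.unique {q' : ℕ} (h : Lands σ p q) (h' : Lands σ p q') : q = q' := by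
  rcases ReflTransGen.total_of_right_unique jumpStep_rightUnique h.1 h'.1 with hq | hq
  · exact ((reflTransGen_iff_eq (not_jumpStep_of_lands h)).1 hq).symm
  · exact (reflTransGen_iff_eq (not_jumpStep_of_lands h')).1 hq

theorem lands_self (h : ∀ k, σ.get p ≠ some (jmp (k + 1))) : Lands σ p p :=
  ⟨ReflTransGen.refl, h⟩

theorem lands_iff_of_jumpStep {p' : ℕ} (h : JumpStep σ p p') : Lands σ p q ↔ Lands σ p' q := by
  refine ⟨fun hl => ⟨?_, hl.2⟩, fun hl => ⟨ReflTransGen.head h hl.1, hl.2⟩⟩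
  rcases ReflTransGen.cases_head hl.1 with rfl | ⟨p'', hp'', hq⟩
  · exact absurd h (not_jumpStep_of_lands hl p')
  · rwa [jumpStep_rightUnique h hp'']

theorem Lands.of_agree (h : Lands σ p q) (hτ : ∀ n ≤ q, τ.get n = σ.get n) : Lands τ p q := by
  obtain ⟨hr, hq⟩ := h
  refine ⟨?_, by rw [hτ q le_rfl]; exact hq⟩
  induction hr using ReflTransGen.head_induction_on with
  | refl => rfl
  | head hs hrest ih =>
    obtain ⟨k, hk, rfl⟩ := hs
    refine ReflTransGen.head ⟨k, ?_, rfl⟩ ih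
    rw [hτ _ (le_of_reflTransGen (ReflTransGen.head ⟨k, hk, rfl⟩ hrest))]
    exact hk

theorem jumpStep_cons_succ {q : ℕ} : JumpStep (a :: σ) (p + 1) (q + 1) ↔ JumpStep σ p q := by
  simp only [JumpStep]
  exact exists_congr fun k => and_congr Iff.rfl (by omega)

theorem reflTransGen_cons_succ {r : ℕ} (h : ReflTransGen (JumpStep (a :: σ)) (p + 1) r) :
    ∃ q, r = q + 1 ∧ ReflTransGen (JumpStep σ) p q := by
  induction h with
  | refl => exact ⟨p, rfl, ReflTransGen.refl⟩
  | tail _ hs ih =>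
    obtain ⟨q, rfl, hq⟩ := ih
    obtain ⟨k, hk, rfl⟩ := hs
    exact ⟨q + (k + 1), by omega, hq.tail (jumpStep_cons_succ.1 ⟨k, hk, by omega⟩)⟩

theorem lands_cons_succ : Lands (a :: σ) (p + 1) (q + 1) ↔ Lands σ p q := by
  refine ⟨fun ⟨h, hq⟩ => ⟨?_, hq⟩, fun ⟨h, hq⟩ => ⟨?_, hq⟩⟩
  · obtain ⟨q', hq', h'⟩ := reflTransGen_cons_succ h
    rwa [Nat.succ_injective hq']
  · exact ReflTransGen.lift (· + 1) (fun _ _ => jumpStep_cons_succ.2) _ _ h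

open Classical in
/-- `extract σ d p` is the projection `π_d` of the thread extracted from `σ` starting at
position `p`; a jump chain that never ends yields `D`. -/
noncomputable def extract (σ : IStream A) : ℕ → ℕ → FinThread A
  | 0, _ => .D
  | d + 1, p =>
    if h : ∃ q, Lands σ p q then
      .ofInstr (σ.get h.choose) (extract σ d (h.choose + 1)) (extract σ d (h.choose + 2))
    else .D

theorem extract_succ_of_lands (h : Lands σ p q) :
    extract σ (d + 1) p = .ofInstr (σ.get q) (extract σ d (q + 1)) (extract σ d (q + 2)) := by
  have hex : ∃ q, Lands σ p q := ⟨q, h⟩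
  rw [extract, dif_pos hex, hex.choose_spec.unique h]

theorem extract_succ_of_not_lands (h : ¬ ∃ q, Lands σ p q) : extract σ (d + 1) p = .D := by
  rw [extract, dif_neg h]

theorem extract_succ_of_not_jmp (h : ∀ k, σ.get p ≠ some (jmp (k + 1))) :
    extract σ (d + 1) p = .ofInstr (σ.get p) (extract σ d (p + 1)) (extract σ d (p + 2)) :=
  extract_succ_of_lands (lands_self h)

theorem extract_of_jumpStep (h : JumpStep σ p q) : extract σ d p = extract σ d q := by
  cases d with
  | zero => rfl
  | succ d =>
    by_cases hl : ∃ r, Lands σ q r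
    · obtain ⟨r, hr⟩ := hl
      rw [extract_succ_of_lands hr, extract_succ_of_lands ((lands_iff_of_jumpStep h).2 hr)]
    · rw [extract_succ_of_not_lands hl,
        extract_succ_of_not_lands fun ⟨r, hr⟩ => hl ⟨r, (lands_iff_of_jumpStep h).1 hr⟩]

theorem extract_of_get_eq_jmp {l : ℕ} (h : σ.get p = some (jmp l)) :
    extract σ d p = extract σ d (p + l) := by
  cases l with
  | zero => rfl
  | succ k => exact extract_of_jumpStep ⟨k, h, rfl⟩

theorem extract_cons_succ : extract (a :: σ) d (p + 1) = extract σ d p := by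
  induction d generalizing p with
  | zero => rfl
  | succ d ih =>
    by_cases hl : ∃ q, Lands σ p q
    · obtain ⟨q, hq⟩ := hl
      rw [extract_succ_of_lands hq, extract_succ_of_lands (lands_cons_succ.2 hq), ih, ih]
      rfl
    · refine (extract_succ_of_not_lands fun ⟨r, hr⟩ => hl ?_).trans
        (extract_succ_of_not_lands hl).symm
      obtain ⟨q, rfl, -⟩ := reflTransGen_cons_succ hr.1
      exact ⟨q, lands_cons_succ.1 hr⟩

theorem extract_append (l : List (Option (PInstr A))) :
    extract (l ++ₛ σ) d (p + l.length) = extract σ d p := by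
  induction l with
  | nil => rfl
  | cons b l ih => rw [List.length_cons, ← add_assoc, cons_append_stream, extract_cons_succ, ih]

theorem extract_cons_jmp (k : ℕ) : extract (some (jmp (k + 1)) :: σ) d 0 = extract σ d k := by
  rw [extract_of_get_eq_jmp rfl, zero_add, extract_cons_succ]

theorem extract_succ_cons (ha : ∀ k, a ≠ some (jmp (k + 1))) :
    extract (a :: σ) (d + 1) 0 = .ofInstr a (extract σ d 0) (extract σ d 1) :=
  (extract_succ_of_not_jmp (σ := a :: σ) (p := 0) ha).trans
    (by rw [extract_cons_succ, extract_cons_succ]; rfl)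

theorem extract_of_get_eq_none (h : σ.get p = none) : extract σ d p = .D := by
  cases d with
  | zero => rfl
  | succ d => rw [extract_succ_of_not_jmp (by simp [h]), h]; rfl

theorem extract_of_get_eq_jmp_zero (h : σ.get p = some (jmp 0)) : extract σ d p = .D := by
  cases d with
  | zero => rfl
  | succ d => rw [extract_succ_of_not_jmp (by simp [h]), h]; rfl

@[simp] theorem extract_const_none : extract (Stream'.const none : IStream A) d p = .D :=
  extract_of_get_eq_none rfl

theorem extract_cons_eq_of_zero (h : ∀ d, extract (a :: σ) d 0 = extract (b :: σ) d 0) :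
    extract (a :: σ) = extract (b :: σ) := by
  ext d (_ | p)
  · exact h d
  · rw [extract_cons_succ, extract_cons_succ]

theorem extract_cons_congr (h : extract σ = extract τ) (a : Option (PInstr A)) :
    extract (a :: σ) = extract (a :: τ) := by
  ext d (_ | p)
  · by_cases ha : ∃ k, a = some (jmp (k + 1))
    · obtain ⟨k, rfl⟩ := ha
      rw [extract_cons_jmp, extract_cons_jmp, h]
    · cases d with
      | zero => rfl
      | succ d => rw [extract_succ_cons (not_exists.1 ha), extract_succ_cons (not_exists.1 ha), h]
  · rw [extract_cons_succ, extract_cons_succ, h]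

theorem extract_succ_eq_of_lands {X Y V : IStream A} (hY : Lands Y p q)
    (hV : extract V = extract X) (hVY : ∀ n ≤ q, V.get n = Y.get n)
    (hd : extract X d = extract Y d) : extract X (d + 1) p = extract Y (d + 1) p := by
  rw [← hV, extract_succ_of_lands (hY.of_agree hVY), extract_succ_of_lands hY, hV, hd,
    hVY q le_rfl]

/-- An extraction step reads the stream only up to the end of a finite jump chain. Both
hypotheses are needed: a never-ending jump chain of `X` may end in a stream that merely agrees
with `X` on a prefix. -/
theorem extract_eq_of_approx {X Y : IStream A}
    (hX : ∀ K, ∃ U, extract U = extract X ∧ ∀ n < K, U.get n = Y.get n)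
    (hY : ∀ K, ∃ V, extract V = extract Y ∧ ∀ n < K, V.get n = X.get n) :
    extract X = extract Y := by
  ext d p
  induction d generalizing p with
  | zero => rfl
  | succ d ih =>
    have hd : extract X d = extract Y d := funext ih
    by_cases hlY : ∃ q, Lands Y p q
    · obtain ⟨q, hq⟩ := hlY
      obtain ⟨U, hU, hUY⟩ := hX (q + 1)
      exact extract_succ_eq_of_lands hq hU (fun n hn => hUY n (by omega)) hd
    by_cases hlX : ∃ q, Lands X p q
    · obtain ⟨q, hq⟩ := hlX
      obtain ⟨V, hV, hVX⟩ := hY (q + 1)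
      exact (extract_succ_eq_of_lands hq hV (fun n hn => hVX n (by omega)) hd.symm).symm
    rw [extract_succ_of_not_lands hlX, extract_succ_of_not_lands hlY]

theorem not_lands_of_invariant (P : ℕ → Prop) (hp : P p)
    (hP : ∀ q, P q → ∃ k, σ.get q = some (jmp (k + 1)) ∧ P (q + (k + 1))) :
    ¬ ∃ q, Lands σ p q := by
  have hreach : ∀ q, ReflTransGen (JumpStep σ) p q → P q := by
    intro q hr
    induction hr with
    | refl => exact hp
    | tail _ hs ih =>
      obtain ⟨k, hk, rfl⟩ := hs
      obtain ⟨k', hk', hP'⟩ := hP _ ih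
      rw [hk] at hk'
      cases hk'
      exact hP'
  rintro ⟨q, hr, hq⟩
  obtain ⟨k, hk, -⟩ := hP q (hreach q hr)
  exact hq k hk

theorem extract_eq_D_of_jmp_loop {X : IStream A} {us : List (PInstr A)}
    (hX : some (jmp (us.length + 1)) :: (us.map some ++ₛ X) = X) (d : ℕ) : extract X d 0 = .D := by
  have hper (q : ℕ) : X.get (q + (us.length + 1)) = X.get q := by
    have := get_append_right q ((jmp (us.length + 1) :: us).map some) X
    rw [List.length_map, List.length_cons] at this
    conv_lhs => rw [← hX]
    rwa [Nat.add_comm q]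
  cases d with
  | zero => rfl
  | succ d =>
    refine extract_succ_of_not_lands (not_lands_of_invariant
      (fun q => X.get q = some (jmp (us.length + 1))) ?_ fun q hq => ⟨_, hq, (hper q).trans hq⟩)
    rw [← hX]
    rfl

theorem extract_cons_jmp_self {l : ℕ} :
    extract (some (jmp l) :: σ) d 0 = extract (some (jmp l) :: σ) d l :=
  (extract_of_get_eq_jmp rfl).trans (by rw [zero_add])

theorem extract_cons_jmp_append (us : List (PInstr A)) (j : ℕ) :
    extract (some (jmp (j + us.length + 1)) :: (us.map some ++ₛ σ)) d 0 = extract σ d j := by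
  rw [extract_of_get_eq_jmp rfl, zero_add, extract_cons_succ]
  simpa using extract_append (σ := σ) (d := d) (p := j) (us.map some)

theorem extract_periodic {l : List (Option (PInstr A))} (h : l ++ₛ σ = σ) (p : ℕ) :
    extract σ d (p + l.length) = extract σ d p := by
  conv_lhs => rw [← h]
  exact extract_append l

end IStream

/-! ### Soundness of the stream model -/

namespace ISTm

open Stream' IStream

variable {A : Type}

/-- The instruction stream of `t` followed by `s`; `t^ω` is the fixed point of `s ↦ t ; s`. -/
def appendStream : ISTm A → IStream A → IStream A
  | ins u, s => some u :: s
  | seq t t', s => t.appendStream (t'.appendStream s)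
  | rep t, _ => fix t.appendStream

@[simp] theorem ins_appendStream (u : PInstr A) (s : IStream A) :
    (ins u).appendStream s = some u :: s :=
  rfl

@[simp] theorem seq_appendStream (t t' : ISTm A) (s : IStream A) :
    (seq t t').appendStream s = t.appendStream (t'.appendStream s) :=
  rfl

@[simp] theorem rep_appendStream (t : ISTm A) (s : IStream A) :
    (rep t).appendStream s = fix t.appendStream :=
  rfl

theorem contractive_appendStream : ∀ t : ISTm A, Contractive t.appendStream
  | ins _ => Contractive.cons _
  | seq t t' => (contractive_appendStream t).comp (contractive_appendStream t')
  | rep _ => Contractive.const _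

theorem extract_appendStream_congr (t : ISTm A) {σ τ : IStream A} (h : extract σ = extract τ) :
    extract (t.appendStream σ) = extract (t.appendStream τ) := by
  induction t generalizing σ τ with
  | ins u => exact extract_cons_congr h _
  | seq t t' iht iht' => exact iht (iht' h)
  | rep t _ => rfl

theorem cat_appendStream (us : List (PInstr A)) (Y : ISTm A) (s : IStream A) :
    (cat us Y).appendStream s = us.map some ++ₛ Y.appendStream s := by
  induction us with
  | nil => rfl
  | cons u us ih => exact congrArg (Stream'.cons (some u)) ih

theorem nel_appendStream (u : PInstr A) (us : List (PInstr A)) (s : IStream A) :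
    (nel u us).appendStream s = (u :: us).map some ++ₛ s := by
  induction us generalizing u with
  | nil => rfl
  | cons v vs ih => exact congrArg (Stream'.cons (some u)) (ih v)

theorem pw_appendStream_fix (x : ISTm A) (n : ℕ) :
    (x.pw n).appendStream (fix x.appendStream) = fix x.appendStream := by
  induction n with
  | zero => exact (contractive_appendStream x).fix_eq
  | succ n ih =>
    change x.appendStream ((x.pw n).appendStream _) = _
    rw [ih, (contractive_appendStream x).fix_eq]

theorem extract_iterate_appendStream {t : ISTm A} {X : IStream A}
    (h : extract (t.appendStream X) = extract X) (K : ℕ) :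
    extract (t.appendStream^[K] X) = extract X := by
  induction K with
  | zero => rfl
  | succ K ih =>
    rw [Function.iterate_succ_apply', ← h]
    exact extract_appendStream_congr t ih

theorem extract_fix_eq_fix {t t' : ISTm A}
    (h : extract (t'.appendStream (fix t.appendStream)) = extract (fix t.appendStream))
    (h' : extract (t.appendStream (fix t'.appendStream)) = extract (fix t'.appendStream)) :
    extract (fix t.appendStream) = extract (fix t'.appendStream) := by
  have approx : ∀ {t' : ISTm A} {X : IStream A}, extract (t'.appendStream X) = extract X →
      ∀ K, ∃ U, extract U = extract X ∧ ∀ n < K, U.get n = (fix t'.appendStream).get n := by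
    intro t' X h K
    refine ⟨_, extract_iterate_appendStream h K, fun n hn => ?_⟩
    rw [(contractive_appendStream t').iterate_get X (fix t'.appendStream) hn,
      Function.iterate_fixed (contractive_appendStream t').fix_eq]
  exact extract_eq_of_approx (approx h) (approx h')

theorem extract_cons_jmp_add_period {us : List (PInstr A)} {X : IStream A} {i l : ℕ}
    (hX : some (jmp i) :: (us.map some ++ₛ X) = X) (hl : l = 0 → ∀ d, extract X d 0 = .D) :
    extract (some (jmp (l + us.length + 1)) :: (us.map some ++ₛ X)) =
      extract (some (jmp l) :: (us.map some ++ₛ X)) := by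
  refine extract_cons_eq_of_zero fun d => ?_
  rw [extract_cons_jmp_append]
  rcases l with _ | l
  · rw [hl rfl d, extract_of_get_eq_jmp_zero rfl]
  · rw [extract_cons_jmp_self, extract_cons_succ]
    conv_lhs => rw [← hX]
    exact extract_cons_succ

theorem extract_fix_nel_jmp_add_length (us : List (PInstr A)) (l : ℕ) :
    extract (fix (nel (jmp (l + us.length + 1)) us).appendStream) =
      extract (fix (nel (jmp l) us).appendStream) := by
  set X₁ := fix (nel (jmp (l + us.length + 1)) us).appendStream
  set X₂ := fix (nel (jmp l) us).appendStream
  have h₁ : some (jmp (l + us.length + 1)) :: (us.map some ++ₛ X₁) = X₁ :=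
    (nel_appendStream _ _ _).symm.trans (contractive_appendStream _).fix_eq
  have h₂ : some (jmp l) :: (us.map some ++ₛ X₂) = X₂ :=
    (nel_appendStream _ _ _).symm.trans (contractive_appendStream _).fix_eq
  apply extract_fix_eq_fix <;> rw [nel_appendStream]
  · change extract (some (jmp l) :: (us.map some ++ₛ X₁)) = extract X₁
    conv_rhs => rw [← h₁]
    refine (extract_cons_jmp_add_period h₁ fun hl => ?_).symm
    subst hl
    exact extract_eq_D_of_jmp_loop (by simpa only [zero_add] using h₁)
  · change extract (some (jmp (l + us.length + 1)) :: (us.map some ++ₛ X₂)) = extract X₂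
    conv_rhs => rw [← h₂]
    refine extract_cons_jmp_add_period h₂ fun hl d => ?_
    subst hl
    rw [← h₂]
    exact extract_of_get_eq_jmp_zero rfl

end ISTm

namespace EqI

open IStream ISTm

variable {A : Type}

theorem extract_appendStream_eq {t t' : ISTm A} (h : t ≡ᵢ t') (s : IStream A) :
    extract (t.appendStream s) = extract (t'.appendStream s) := by
  induction h generalizing s with
  | refl => rfl
  | symm _ ih => exact (ih s).symm
  | trans _ _ ih₁ ih₂ => exact (ih₁ s).trans (ih₂ s)
  | seqCongr _ _ ihs iht => exact (ihs _).trans (extract_appendStream_congr _ (iht s))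
  | @repCongr t t' _ ih =>
    exact extract_fix_eq_fix
      ((ih _).symm.trans (congrArg extract (contractive_appendStream t).fix_eq))
      ((ih _).trans (congrArg extract (contractive_appendStream t').fix_eq))
  | pga1 => rfl
  | pga2 x n =>
    exact congrArg extract ((contractive_appendStream _).eq_fix (pw_appendStream_fix x n)).symm
  | pga3 => rfl
  | pga4 x y =>
    exact congrArg extract
      ((contractive_appendStream x).fix_comp (contractive_appendStream y))
  | pga5 us =>
    rw [cat_appendStream, cat_appendStream]
    refine extract_cons_eq_of_zero fun d => ?_
    rw [← zero_add us.length, extract_cons_jmp_append, extract_of_get_eq_jmp_zero rfl,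
      extract_of_get_eq_jmp_zero rfl]
  | pga6 us l =>
    rw [cat_appendStream, cat_appendStream]
    refine extract_cons_eq_of_zero fun d => ?_
    rw [← zero_add us.length, extract_cons_jmp_append, zero_add, extract_cons_jmp_append]
    exact extract_cons_jmp_self
  | pga7 us l => exact extract_fix_nel_jmp_add_length us l
  | pga8 us v vs l =>
    rw [cat_appendStream, cat_appendStream, rep_appendStream]
    refine extract_cons_eq_of_zero fun d => ?_
    have hR := (nel_appendStream v vs _).symm.trans (contractive_appendStream (nel v vs)).fix_eq
    rw [show l + us.length + vs.length + 2 = l + (vs.length + 1) + us.length + 1 by omega,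
      extract_cons_jmp_append, extract_cons_jmp_append]
    simpa using extract_periodic hR l

end EqI

namespace TT

open IStream

variable {A : Type}

/-- `x.sem d` models the projection `π_d x`. -/
noncomputable def sem : TT A → ℕ → FinThread A
  | D, _ => .D
  | S, 0 => .D
  | S, _ + 1 => .S
  | pcc _ _ _, 0 => .D
  | pcc x a y, d + 1 => .pcc (x.sem d) a (y.sem d)
  | proj n x, d => x.sem (min n d)
  | extr t, d => extract (t.appendStream (.const none)) d 0

@[simp] theorem sem_extr (t : ISTm A) (d : ℕ) :
    (extr t).sem d = extract (t.appendStream (.const none)) d 0 :=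
  rfl

theorem sem_zero : ∀ x : TT A, x.sem 0 = .D
  | D | S | pcc _ _ _ | extr _ => rfl
  | proj _ x => by rw [sem, Nat.min_zero, sem_zero x]

end TT

namespace EqT

open IStream TT

variable {A : Type}

theorem sem_eq {x y : TT A} (h : x ≡ₜ y) : x.sem = y.sem := by
  induction h with
  | refl => rfl
  | symm _ ih => exact ih.symm
  | trans _ _ ih₁ ih₂ => exact ih₁.trans ih₂
  | pccCongr a _ _ ihx ihy => ext (_ | d) <;> simp [sem, ihx, ihy]
  | projCongr n _ ih => ext d; simp [sem, ih]
  | extrCongr h => ext d; exact congrFun (congrFun (h.extract_appendStream_eq _) d) 0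
  | te1 a | te2 a X | te3 a | te4 a X | te5 a | te6 a X | te12 | te13 X =>
    ext (_ | d)
    · rfl
    · simp only [sem_extr, ISTm.ins_appendStream, ISTm.seq_appendStream]
      rw [extract_succ_cons (by simp)]
      simp [sem, FinThread.ofInstr, extract_cons_jmp 1]
  | te7 l =>
    ext d
    rcases l with _ | k
    · exact extract_of_get_eq_jmp_zero rfl
    · exact (extract_cons_jmp k).trans extract_const_none
  | te8 X => ext d; exact extract_of_get_eq_jmp_zero rfl
  | te9 X => ext d; exact extract_cons_jmp 0
  | te10 l u =>
    ext d
    exact (extract_cons_jmp (l + 1)).trans (extract_cons_succ.trans extract_const_none)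
  | te11 l u X =>
    ext d
    exact (extract_cons_jmp (l + 1)).trans (extract_cons_succ.trans (extract_cons_jmp l).symm)
  | pr1 x => ext d; simp [sem, sem_zero]
  | pr2 n => rfl
  | pr3 n => ext (_ | d) <;> simp [sem, Nat.succ_min_succ]
  | pr4 n x y a => ext (_ | d) <;> simp [sem, Nat.succ_min_succ]
  | aip _ ih => ext d; simpa [sem] using congrFun (ih d) d

end EqT

/-! ### Exit threads -/

/-- Finite threads whose leaves may also be exits: `exit k` leaves the instruction sequence
towards the `k`-th instruction after it, counting from `0`. -/
inductive ExitThread (A : Type) where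
  | D : ExitThread A
  | S : ExitThread A
  | exit : ℕ → ExitThread A
  | pcc : ExitThread A → A → ExitThread A → ExitThread A

namespace ExitThread

variable {A : Type}

def fill : ExitThread A → (ℕ → TT A) → TT A
  | D, _ => .D
  | S, _ => .S
  | exit k, H => H k
  | pcc x a y, H => .pcc (x.fill H) a (y.fill H)

def prune : ExitThread A → ExitThread A
  | exit _ => D
  | pcc x a y => pcc x.prune a y.prune
  | T => T

theorem fill_prune (H : ℕ → TT A) : ∀ T : ExitThread A, T.prune.fill H = T.fill fun _ => .D
  | D | S | exit _ => rfl
  | pcc x a y => by rw [prune, fill, fill, fill_prune H x, fill_prune H y]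

theorem eq_of_sem_fill_eq (E : ℕ → ℕ → TT A) (hE : ∀ n k, (E n k).sem 1 = if k < n then .S else .D)
    {T T' : ExitThread A} (h : ∀ n, (T.fill (E n)).sem = (T'.fill (E n)).sem) : T = T' := by
  induction T generalizing T' with
  | D =>
    cases T' with
    | D => rfl
    | exit k => simpa [fill, TT.sem, hE] using congrFun (h (k + 1)) 1
    | _ => simpa [fill, TT.sem] using congrFun (h 0) 1
  | S =>
    cases T' with
    | S => rfl
    | _ => simpa [fill, TT.sem, hE] using congrFun (h 0) 1
  | exit k =>
    cases T' with
    | exit k' =>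
      rcases lt_trichotomy k k' with hk | rfl | hk
      · simpa [fill, hE, hk, hk.not_gt] using congrFun (h (k + 1)) 1
      · rfl
      · simpa [fill, hE, hk, hk.not_gt] using congrFun (h (k' + 1)) 1
    | D => simpa [fill, TT.sem, hE] using congrFun (h (k + 1)) 1
    | _ => simpa [fill, TT.sem, hE] using congrFun (h 0) 1
  | pcc x a y ihx ihy =>
    cases T' with
    | pcc x' b y' =>
      have hd := fun n d => congrFun (h n) (d + 1)
      simp only [fill, TT.sem, FinThread.pcc.injEq] at hd
      obtain rfl : a = b := (hd 0 0).2.1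
      rw [ihx fun n => funext fun d => (hd n d).1, ihy fun n => funext fun d => (hd n d).2.2]
    | _ => simpa [fill, TT.sem, hE] using congrFun (h 0) 1

end ExitThread

/-! ### Behavioural congruence -/

namespace ISTm

open ExitThread IStream

variable {A : Type} {t t' : ISTm A} {u : PInstr A} {us : List (PInstr A)}

/-- The thread of `#l ; t`, i.e. of `t` entered at its `l`-th instruction (`D` if `l = 0`). -/
def threadAt (t : ISTm A) (l : ℕ) : TT A := .extr (.seq (.ins (jmp l)) t)

def JumpEquiv (t t' : ISTm A) : Prop := ∀ l, t.threadAt l ≡ₜ t'.threadAt l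

theorem JumpEquiv.symm (h : JumpEquiv t t') : JumpEquiv t' t := fun l => (h l).symm

theorem threadAt_congr (h : t ≡ᵢ t') (l : ℕ) : t.threadAt l ≡ₜ t'.threadAt l :=
  EqT.extrCongr (EqI.seqCongr (EqI.refl _) h)

theorem JumpEquiv.seq_left {Y Y' : ISTm A} (h : JumpEquiv Y Y') (t : ISTm A) :
    JumpEquiv (seq t Y) (seq t Y') := by
  induction t generalizing Y Y' with
  | ins u =>
    have hY : .extr Y ≡ₜ .extr Y' := (EqT.te9 Y).symm.trans ((h 1).trans (EqT.te9 Y'))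
    rintro (_ | _ | l)
    · exact (EqT.te8 _).trans (EqT.te8 _).symm
    · refine (EqT.te9 _).trans (EqT.trans ?_ (EqT.te9 _).symm)
      cases u with
      | basic a => exact (EqT.te2 a Y).trans ((EqT.pccCongr a hY hY).trans (EqT.te2 a Y').symm)
      | ptst a => exact (EqT.te4 a Y).trans ((EqT.pccCongr a hY (h 2)).trans (EqT.te4 a Y').symm)
      | ntst a => exact (EqT.te6 a Y).trans ((EqT.pccCongr a (h 2) hY).trans (EqT.te6 a Y').symm)
      | jmp k => exact h k
      | halt => exact (EqT.te13 Y).trans (EqT.te13 Y').symm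
    · exact (EqT.te11 l u Y).trans ((h (l + 1)).trans (EqT.te11 l u Y').symm)
  | seq s u ihs ihu =>
    intro l
    calc threadAt (seq (seq s u) Y) l ≡ₜ threadAt (seq s (seq u Y)) l :=
          threadAt_congr (EqI.pga1 s u Y) l
      _ ≡ₜ threadAt (seq s (seq u Y')) l := ihs (ihu h) l
      _ ≡ₜ threadAt (seq (seq s u) Y') l := threadAt_congr (EqI.pga1 s u Y').symm l
  | rep s =>
    exact fun l => (threadAt_congr (EqI.pga3 s Y) l).trans (threadAt_congr (EqI.pga3 s Y') l).symm

/-- The exit thread of `#l ; u₁ ; … ; uₘ`. -/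
def jumpThread : List (PInstr A) → ℕ → ExitThread A
  | _, 0 => .D
  | [], l + 1 => .exit l
  | basic a :: us, 1 => .pcc (jumpThread us 1) a (jumpThread us 1)
  | ptst a :: us, 1 => .pcc (jumpThread us 1) a (jumpThread us 2)
  | ntst a :: us, 1 => .pcc (jumpThread us 2) a (jumpThread us 1)
  | jmp k :: us, 1 => jumpThread us k
  | halt :: _, 1 => .S
  | _ :: us, l + 2 => jumpThread us (l + 1)

theorem threadAt_seq_ins {X : ISTm A} {H : ℕ → TT A}
    (hX : ∀ l, X.threadAt l ≡ₜ (jumpThread us l).fill H) (u : PInstr A) (l : ℕ) :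
    (seq (ins u) X).threadAt l ≡ₜ (jumpThread (u :: us) l).fill H := by
  have hX₁ : .extr X ≡ₜ (jumpThread us 1).fill H := (EqT.te9 X).symm.trans (hX 1)
  rcases l with _ | _ | l
  · exact EqT.te8 _
  · refine (EqT.te9 _).trans ?_
    cases u with
    | basic a => exact (EqT.te2 a X).trans (EqT.pccCongr a hX₁ hX₁)
    | ptst a => exact (EqT.te4 a X).trans (EqT.pccCongr a hX₁ (hX 2))
    | ntst a => exact (EqT.te6 a X).trans (EqT.pccCongr a (hX 2) hX₁)
    | jmp k => exact hX k
    | halt => exact EqT.te13 X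
  · cases u <;> exact (EqT.te11 l _ X).trans (hX (l + 1))

theorem threadAt_cat (us : List (PInstr A)) (Y : ISTm A) (l : ℕ) :
    (cat us Y).threadAt l ≡ₜ (jumpThread us l).fill (Y.threadAt <| · + 1) := by
  induction us generalizing l with
  | nil =>
    rcases l with _ | l
    · exact EqT.te8 _
    · exact EqT.refl _
  | cons u us ih => exact threadAt_seq_ins ih u l

theorem threadAt_ins (u : PInstr A) (l : ℕ) :
    (ins u).threadAt l ≡ₜ (jumpThread [u] l).fill fun _ => .D := by
  rcases l with _ | _ | l
  · exact EqT.te8 _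
  · refine (EqT.te9 _).trans ?_
    cases u with
    | basic a => exact EqT.te1 a
    | ptst a => exact EqT.te3 a
    | ntst a => exact EqT.te5 a
    | jmp k => cases k <;> exact EqT.te7 _
    | halt => exact EqT.te12
  · cases u <;> exact EqT.te10 l _

theorem threadAt_nel (u : PInstr A) (us : List (PInstr A)) (l : ℕ) :
    (nel u us).threadAt l ≡ₜ (jumpThread (u :: us) l).fill fun _ => .D := by
  induction us generalizing u l with
  | nil => exact threadAt_ins u l
  | cons v vs ih => exact threadAt_seq_ins (ih v) u l

theorem seq_nel_eqI_cat (u : PInstr A) (us : List (PInstr A)) (Y : ISTm A) :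
    seq (nel u us) Y ≡ᵢ cat (u :: us) Y := by
  induction us generalizing u with
  | nil => exact EqI.refl _
  | cons v vs ih => exact (EqI.pga1 _ _ _).trans (EqI.seqCongr (EqI.refl _) (ih v))

theorem cat_nel (u : PInstr A) (us : List (PInstr A)) (v : PInstr A) (vs : List (PInstr A)) :
    cat (u :: us) (nel v vs) = nel u (us ++ v :: vs) := by
  induction us generalizing u with
  | nil => rfl
  | cons w ws ih => exact congrArg (seq (ins u)) (ih w)

theorem eqI_nel_or_absorbs : ∀ t : ISTm A, (∃ u us, t ≡ᵢ nel u us) ∨ ∀ W, seq t W ≡ᵢ t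
  | ins u => .inl ⟨u, [], EqI.refl _⟩
  | rep s => .inr fun W => EqI.pga3 s W
  | seq s t => by
    rcases eqI_nel_or_absorbs s with ⟨u, us, hs⟩ | hs
    · rcases eqI_nel_or_absorbs t with ⟨v, vs, ht⟩ | ht
      · refine .inl ⟨u, us ++ v :: vs, ?_⟩
        rw [← cat_nel]
        exact (EqI.seqCongr hs ht).trans (seq_nel_eqI_cat u us _)
      · exact .inr fun W => (EqI.pga1 s t W).trans (EqI.seqCongr (EqI.refl s) (ht W))
    · exact .inr fun W => (EqI.pga1 s t W).trans ((hs _).trans (hs t).symm)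

theorem appHalts_eqI_of_absorbs (ht : ∀ W, seq t W ≡ᵢ t) : ∀ n, appHalts t n ≡ᵢ t
  | 0 => EqI.refl t
  | m + 1 => ht (halts m)

theorem threadAt_seq_of_eqI_nel (ht : t ≡ᵢ nel u us) (Z : ISTm A) (l : ℕ) :
    (seq t Z).threadAt l ≡ₜ (jumpThread (u :: us) l).fill (Z.threadAt <| · + 1) :=
  (threadAt_congr ((EqI.seqCongr ht (EqI.refl Z)).trans (seq_nel_eqI_cat u us Z)) l).trans
    (threadAt_cat _ Z l)

/-- The exits of `t` lead, in `t ; !ⁿ`, to termination for `k < n` and to `D` otherwise. -/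
def haltsExit : ℕ → ℕ → TT A
  | 0, _ => .D
  | m + 1, k => (halts m).threadAt (k + 1)

theorem threadAt_appHalts_of_eqI_nel (ht : t ≡ᵢ nel u us) (n l : ℕ) :
    (appHalts t n).threadAt l ≡ₜ (jumpThread (u :: us) l).fill (haltsExit n) := by
  cases n with
  | zero => exact (threadAt_congr ht l).trans (threadAt_nel u us l)
  | succ m => exact threadAt_seq_of_eqI_nel ht (halts m) l

theorem get_halts_appendStream (m k : ℕ) :
    ((halts m : ISTm A).appendStream (.const none)).get k = if k ≤ m then some halt else none := by
  induction m generalizing k with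
  | zero => cases k <;> simp [halts]
  | succ m ih =>
    cases k with
    | zero => rfl
    | succ k => simpa [halts] using ih k

theorem sem_haltsExit (n k : ℕ) : (haltsExit n k : TT A).sem 1 = if k < n then .S else .D := by
  cases n with
  | zero => rfl
  | succ m =>
    change extract (Stream'.cons (some (jmp (k + 1))) _) 1 0 = _
    rw [extract_cons_jmp, extract_succ_of_not_jmp (by simp [get_halts_appendStream]),
      get_halts_appendStream]
    by_cases hk : k ≤ m <;> simp [hk, FinThread.ofInstr]

end ISTm

namespace BCong

open ISTm ExitThread

variable {A : Type} {t t' : ISTm A} {u u' : PInstr A} {us us' : List (PInstr A)}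

theorem symm (h : BCong t t') : BCong t' t := fun l n => (h l n).symm

theorem jumpThread_eq (h : BCong t t') (ht : t ≡ᵢ nel u us) (ht' : t' ≡ᵢ nel u' us') (l : ℕ) :
    jumpThread (u :: us) l = jumpThread (u' :: us') l :=
  eq_of_sem_fill_eq haltsExit sem_haltsExit fun n => EqT.sem_eq <|
    (threadAt_appHalts_of_eqI_nel ht n l).symm.trans
      ((h l n).trans (threadAt_appHalts_of_eqI_nel ht' n l))

theorem jumpThread_eq_prune (h : BCong t t') (ht : t ≡ᵢ nel u us) (ht' : ∀ W, seq t' W ≡ᵢ t')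
    (l : ℕ) : jumpThread (u :: us) l = (jumpThread (u :: us) l).prune := by
  have hconst (n : ℕ) : (jumpThread (u :: us) l).fill (haltsExit n) ≡ₜ t'.threadAt l :=
    (threadAt_appHalts_of_eqI_nel ht n l).symm.trans
      ((h l n).trans (threadAt_congr (appHalts_eqI_of_absorbs ht' n) l))
  refine eq_of_sem_fill_eq haltsExit sem_haltsExit fun n => ?_
  rw [fill_prune]
  exact EqT.sem_eq ((hconst n).trans (hconst 0).symm)

theorem jumpEquiv_seq_right_of_eqI_nel_of_absorbs (h : BCong t t') (ht : t ≡ᵢ nel u us)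
    (ht' : ∀ W, seq t' W ≡ᵢ t') (Z : ISTm A) : JumpEquiv (seq t Z) (seq t' Z) := fun l =>
  calc (seq t Z).threadAt l
      ≡ₜ (jumpThread (u :: us) l).fill (Z.threadAt <| · + 1) := threadAt_seq_of_eqI_nel ht Z l
    _ = (jumpThread (u :: us) l).fill (haltsExit 0) := by
      rw [jumpThread_eq_prune h ht ht' l, fill_prune, fill_prune]
    _ ≡ₜ (appHalts t' 0).threadAt l := (threadAt_appHalts_of_eqI_nel ht 0 l).symm.trans (h l 0)
    _ ≡ₜ (seq t' Z).threadAt l := threadAt_congr (ht' Z).symm l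

theorem jumpEquiv_seq_right (h : BCong t t') (Z : ISTm A) : JumpEquiv (seq t Z) (seq t' Z) := by
  rcases t.eqI_nel_or_absorbs with ⟨u, us, ht⟩ | ht <;>
    rcases t'.eqI_nel_or_absorbs with ⟨u', us', ht'⟩ | ht'
  · intro l
    calc (seq t Z).threadAt l
        ≡ₜ (jumpThread (u :: us) l).fill (Z.threadAt <| · + 1) := threadAt_seq_of_eqI_nel ht Z l
      _ = (jumpThread (u' :: us') l).fill (Z.threadAt <| · + 1) := by
        rw [h.jumpThread_eq ht ht' l]
      _ ≡ₜ (seq t' Z).threadAt l := (threadAt_seq_of_eqI_nel ht' Z l).symm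
  · exact h.jumpEquiv_seq_right_of_eqI_nel_of_absorbs ht ht' Z
  · exact (h.symm.jumpEquiv_seq_right_of_eqI_nel_of_absorbs ht' ht Z).symm
  · intro l
    calc (seq t Z).threadAt l ≡ₜ t.threadAt l := threadAt_congr (ht Z) l
      _ ≡ₜ t'.threadAt l := h l 0
      _ ≡ₜ (seq t' Z).threadAt l := threadAt_congr (ht' Z).symm l

end BCong

/-- Behavioural congruence of closed PGA terms is a congruence with
respect to concatenation. -/
theorem bcong_seq_congr {A : Type} {t₁ t₁' t₂ t₂' : ISTm A}
    (h₁ : BCong t₁ t₁') (h₂ : BCong t₂ t₂') :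
    BCong (.seq t₁ t₂) (.seq t₁' t₂') := by
  intro l n
  have hassoc (s s' : ISTm A) : appHalts (.seq s s') n ≡ᵢ .seq s (appHalts s' n) := by
    cases n with
    | zero => exact EqI.refl _
    | succ m => exact EqI.pga1 s s' (halts m)
  have h₂' : ISTm.JumpEquiv (appHalts t₂ n) (appHalts t₂' n) := fun p => h₂ p n
  calc (appHalts (.seq t₁ t₂) n).threadAt l
      ≡ₜ (ISTm.seq t₁ (appHalts t₂ n)).threadAt l := ISTm.threadAt_congr (hassoc _ _) l
    _ ≡ₜ (ISTm.seq t₁' (appHalts t₂ n)).threadAt l := h₁.jumpEquiv_seq_right _ l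
    _ ≡ₜ (ISTm.seq t₁' (appHalts t₂' n)).threadAt l := h₂'.seq_left t₁' l
    _ ≡ₜ (appHalts (.seq t₁' t₂') n).threadAt l := ISTm.threadAt_congr (hassoc _ _).symm l
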